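/- Let 2 ≤ s ≤ t be integers and let R be a regular local ring of dimension st whose maximal ideal is generated by elements (X_{ij})_{1≤i≤s,1≤j≤t} (a regular system of parameters). Set A = R/I_s(X), a Cohen-Macaulay local ring of dimension st − (t−s+1), with maximal ideal m. Let q = QA where Q is the ideal of R generated by the X_{ij} with j−i < 0 or j−i > t−s together with X_{ij} − X_{i−1,j−1} for 2 ≤ i ≤ s, 0 ≤ j−i ≤ t−s. Then q is a parameter ideal of A (generated by st − (t−s+1) elements forming a system of parameters) and m^s = q·m^{s−1}. -/

import Mathlib

/-!
Modulo `Q` every entry `X i j` becomes the band entry `y (j - i)`, where `y d = X 0 d` for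
`0 ≤ d ≤ t - s` and `y = 0` off the band.  As all entries lie in `L = (X i j)`, a congruence mod `Q`
of entries gives congruences mod `Q L^(s-1)` of products of `s` entries and of `s × s` minors.  So
`L^s ⊆ Q L^(s-1) + I_s(X)` reduces to showing that every monomial of degree `s` in
`y 0, …, y (t - s)` lies in the ideal of `s × s` minors of the band matrix `(y (j - i))`, which
holds by a unitriangularity argument.  Then `m^s ⊆ q` gives `√q = m`, as `m` is maximal, and `q`
has one generator for each position off the first-row band, that is `st - (t - s + 1)` of them.
-/

/-- The ideal of `R` generated by the `s × s` minors of the `s × t` matrix `X`. -/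
def minorsIdeal (R : Type*) [CommRing R] {s t : ℕ} (X : Fin s → Fin t → R) : Ideal R :=
  Ideal.span {r | ∃ c : Fin s → Fin t, StrictMono c ∧
    r = Matrix.det (Matrix.of fun i j : Fin s => X i (c j))}

/-- The ideal `L` of `R` generated by all the entries `X i j`. -/
def entriesIdeal (R : Type*) [CommRing R] {s t : ℕ} (X : Fin s → Fin t → R) : Ideal R :=
  Ideal.span {r | ∃ i j, r = X i j}

/-- The ideal `Q` of `R` generated by the `X i j` with `j − i < 0` or `j − i > t − s`,
together with the differences `X i j − X (i−1) (j−1)` for `i ≥ 1` (second row on) and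
`0 ≤ j − i ≤ t − s`.  (Indices here are 0-based, so `i` ranges over `0, …, s−1` and `j`
over `0, …, t−1`; the conditions on `j − i` are the same as for the 1-based indices of
the paper.) -/
def diagIdeal (R : Type*) [CommRing R] {s t : ℕ} (X : Fin s → Fin t → R) : Ideal R :=
  Ideal.span
    ({r | ∃ (i : Fin s) (j : Fin t), ((j : ℕ) < (i : ℕ) ∨ t - s < (j : ℕ) - (i : ℕ)) ∧
        r = X i j} ∪
     {r | ∃ (i : Fin s) (j : Fin t), 1 ≤ (i : ℕ) ∧ (i : ℕ) ≤ (j : ℕ) ∧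
        (j : ℕ) - (i : ℕ) ≤ t - s ∧
        r = X i j - X ⟨(i : ℕ) - 1, Nat.lt_of_le_of_lt (Nat.sub_le _ _) i.isLt⟩
              ⟨(j : ℕ) - 1, Nat.lt_of_le_of_lt (Nat.sub_le _ _) j.isLt⟩})

open Finset

namespace Ideal

variable {R : Type*} [CommRing R]

theorem span_pow_le_of_forall_prod_mem {S : Set R} {K : Ideal R} {n : ℕ}
    (h : ∀ u : Fin n → R, (∀ k, u k ∈ S) → ∏ k, u k ∈ K) : span S ^ n ≤ K := by
  rw [span, Submodule.span_pow, Submodule.span_le]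
  intro x hx
  obtain ⟨u, rfl⟩ := Set.mem_pow.1 hx
  rw [List.prod_ofFn]
  exact h (fun k => u k) fun k => (u k).2

theorem prod_mem_pow_card {ι : Type*} [Fintype ι] {L : Ideal R} {u : ι → R}
    (hu : ∀ i, u i ∈ L) : ∏ i, u i ∈ L ^ Fintype.card ι := by
  have := prod_mem_prod (s := univ) (I := fun _ => L) fun i _ => hu i
  rwa [prod_const, card_univ] at this

theorem prod_sub_prod_mem_mul_pow {Q L : Ideal R} {n : ℕ} {u v : Fin n → R}
    (hu : ∀ k, u k ∈ L) (hv : ∀ k, v k ∈ L) (huv : ∀ k, u k - v k ∈ Q) :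
    ∏ k, u k - ∏ k, v k ∈ Q * L ^ (n - 1) := by
  induction n with
  | zero => simp
  | succ n ih =>
    rw [Fin.prod_univ_succ u, Fin.prod_univ_succ v,
      show ∀ a b c d : R, a * b - c * d = (a - c) * b + c * (b - d) by intros; ring]
    refine add_mem (mul_mem_mul (huv 0) ?_) ?_
    · simpa using prod_mem_pow_card fun k => hu (Fin.succ k)
    · have hle : L * (Q * L ^ (n - 1)) ≤ Q * L ^ (n + 1 - 1) := by
        rw [mul_left_comm, ← pow_succ']
        exact mul_mono_right (pow_le_pow_right (by omega))
      exact hle (mul_mem_mul (hv 0) (ih (fun k => hu _) (fun k => hv _) fun k => huv _))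

end Ideal

namespace Matrix

variable {R : Type*} [CommRing R]

theorem det_sub_det_mem_mul_pow {Q L : Ideal R} {n : ℕ} {M N : Matrix (Fin n) (Fin n) R}
    (hM : ∀ i j, M i j ∈ L) (hN : ∀ i j, N i j ∈ L) (hMN : ∀ i j, M i j - N i j ∈ Q) :
    M.det - N.det ∈ Q * L ^ (n - 1) := by
  rw [det_apply', det_apply', ← sum_sub_distrib]
  refine Ideal.sum_mem _ fun σ _ => ?_
  rw [← mul_sub]
  exact Ideal.mul_mem_left _ _ (Ideal.prod_sub_prod_mem_mul_pow (fun _ => hM _ _) (fun _ => hN _ _)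
    fun _ => hMN _ _)

end Matrix

theorem sum_sq_lt_sum_sq_add_sub_perm {s : ℕ} {α : Fin s → ℕ} (hα : Monotone α)
    {σ : Equiv.Perm (Fin s)} (hσ : σ ≠ 1) (hle : ∀ i, (σ i : ℕ) ≤ α i + i) :
    ∑ i, α i ^ 2 < ∑ i, (α i + i - σ i) ^ 2 := by
  zify [hle]
  set a : Fin s → ℤ := fun i => α i
  set g : Fin s → ℤ := fun i => (i : ℕ)
  have hrearr : ∑ i, a i * g (σ i) ≤ ∑ i, a i * g i :=
    Monovary.sum_mul_comp_perm_le_sum_mul fun i j hij => by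
      simp only [a, g] at hij ⊢
      exact_mod_cast hα (le_of_lt (by exact_mod_cast hij : i < j))
  obtain ⟨j, hj⟩ : ∃ j, σ j ≠ j := by
    by_contra! h
    exact hσ (Equiv.ext h)
  have hmoved : 1 ≤ ∑ i, (g i - g (σ i)) ^ 2 := by
    have : g j - g (σ j) ≠ 0 := by
      have : (σ j : ℕ) ≠ j := fun h => hj (Fin.ext h)
      simp only [g]
      omega
    calc (1 : ℤ) ≤ (g j - g (σ j)) ^ 2 := by
          rcases lt_or_gt_of_ne this with h | h <;> nlinarith
      _ ≤ _ := single_le_sum (f := fun i => (g i - g (σ i)) ^ 2) (fun i _ => sq_nonneg _)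
          (mem_univ j)
  have hexpand : ∑ i, (a i + g i - g (σ i)) ^ 2 = ∑ i, a i ^ 2
      + 2 * (∑ i, a i * g i - ∑ i, a i * g (σ i)) + ∑ i, (g i - g (σ i)) ^ 2 := by
    simp only [mul_sum, ← sum_sub_distrib, ← sum_add_distrib]
    exact sum_congr rfl fun i _ => by ring
  change ∑ i, a i ^ 2 < ∑ i, (a i + g i - g (σ i)) ^ 2
  linarith

section Band

variable {R : Type*} [CommRing R] (y : ℕ → R) (w : ℕ)

def bandEntry (i j : ℕ) : R :=
  if i ≤ j ∧ j - i ≤ w then y (j - i) else 0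

def bandMinors (s : ℕ) : Set R :=
  {r | ∃ c : Fin s → ℕ, StrictMono c ∧ (∀ k, c k < w + s) ∧
    r = (Matrix.of fun i k : Fin s => bandEntry y w i (c k)).det}

variable {y w} {s : ℕ}

theorem prod_bandEntry_mem {J : Ideal R} {a b : Fin s → ℕ}
    (h : (∀ k, a k ≤ b k ∧ b k - a k ≤ w) → ∏ k, y (b k - a k) ∈ J) :
    ∏ k, bandEntry y w (a k) (b k) ∈ J := by
  by_cases hband : ∀ k, a k ≤ b k ∧ b k - a k ≤ w
  · simpa only [bandEntry, if_pos (hband _)] using h hband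
  · obtain ⟨k, hk⟩ := not_forall.1 hband
    rw [prod_eq_zero (mem_univ k) (if_neg hk)]
    exact J.zero_mem

/-- The band minor with columns `α k + k` has leading term `∏ k, y (α k)`; every other term of its
expansion is a monomial in the `y`'s with strictly larger sum of squared indices. -/
theorem prod_mem_of_forall_sum_sq_lt {J : Ideal R} (hJ : bandMinors y w s ⊆ J)
    {α : Fin s → ℕ} (hα : Monotone α) (hαw : ∀ k, α k ≤ w)
    (hlarger : ∀ β : Fin s → ℕ, (∀ k, β k ≤ w) → ∑ k, α k ^ 2 < ∑ k, β k ^ 2 →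
      ∏ k, y (β k) ∈ J) :
    ∏ k, y (α k) ∈ J := by
  classical
  set c : Fin s → ℕ := fun k => α k + k
  have hdet : (Matrix.of fun i k : Fin s => bandEntry y w i (c k)).det ∈ J :=
    hJ ⟨c, fun k l hkl => Nat.add_lt_add_of_le_of_lt (hα hkl.le) hkl,
      fun k => by have := hαw k; have := k.isLt; simp only [c]; omega, rfl⟩
  have hlead : ∏ k : Fin s, bandEntry y w k (c k) = ∏ k, y (α k) :=
    prod_congr rfl fun k _ => by simp [bandEntry, c, hαw k]
  rw [Matrix.det_apply', ← add_sum_erase _ _ (mem_univ 1)] at hdet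
  simp only [Matrix.of_apply, Equiv.Perm.coe_one, id, Equiv.Perm.sign_one, Units.val_one,
    Int.cast_one, one_mul, hlead] at hdet
  refine (J.add_mem_iff_left (Ideal.sum_mem _ fun σ hσ => J.mul_mem_left _ ?_)).1 hdet
  refine prod_bandEntry_mem fun hband => hlarger _ (fun k => (hband k).2) ?_
  exact sum_sq_lt_sum_sq_add_sub_perm hα (ne_of_mem_erase hσ) fun k => (hband k).1

theorem prod_mem_span_bandMinors (α : Fin s → ℕ) (hα : ∀ k, α k ≤ w) :
    ∏ k, y (α k) ∈ Ideal.span (bandMinors y w s) := by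
  induction hn : s * w ^ 2 - ∑ k, α k ^ 2 using Nat.strong_induction_on generalizing α with
  | _ n ih =>
  have hbound : ∀ β : Fin s → ℕ, (∀ k, β k ≤ w) → ∑ k, β k ^ 2 ≤ s * w ^ 2 := fun β hβ => by
    simpa using sum_le_sum fun k (_ : k ∈ univ) => Nat.pow_le_pow_left (hβ k) 2
  set τ := Tuple.sort α
  have hsum : ∑ k, α (τ k) ^ 2 = ∑ k, α k ^ 2 := Equiv.sum_comp τ (fun k => α k ^ 2)
  rw [← Equiv.prod_comp τ]
  refine prod_mem_of_forall_sum_sq_lt Ideal.subset_span (Tuple.monotone_sort α)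
    (fun k => hα _) fun β hβ hlt => ih _ ?_ β hβ rfl
  have := hbound β hβ
  omega

end Band

section DeterminantalIdeals

variable {R : Type*} [CommRing R] {s t : ℕ} (X : Fin s → Fin t → R)

theorem X_mem_entriesIdeal (i : Fin s) (j : Fin t) : X i j ∈ entriesIdeal R X :=
  Ideal.subset_span ⟨i, j, rfl⟩

theorem X_mem_diagIdeal {i : Fin s} {j : Fin t}
    (h : (j : ℕ) < i ∨ t - s < (j : ℕ) - i) : X i j ∈ diagIdeal R X :=
  Ideal.subset_span (Or.inl ⟨i, j, h, rfl⟩)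

theorem X_sub_X_mem_diagIdeal {i j : ℕ} (hi : i + 1 < s) (hj : j + 1 < t) (hij : i ≤ j)
    (hw : j - i ≤ t - s) :
    X ⟨i + 1, hi⟩ ⟨j + 1, hj⟩ - X ⟨i, by omega⟩ ⟨j, by omega⟩ ∈ diagIdeal R X :=
  Ideal.subset_span
    (Or.inr ⟨⟨i + 1, hi⟩, ⟨j + 1, hj⟩, by simp, by simp [hij], by simp; omega, rfl⟩)

theorem diagIdeal_le_entriesIdeal : diagIdeal R X ≤ entriesIdeal R X := by
  rw [diagIdeal, Ideal.span_le]
  rintro _ (⟨i, j, -, rfl⟩ | ⟨i, j, -, -, -, rfl⟩)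
  · exact X_mem_entriesIdeal X i j
  · exact sub_mem (X_mem_entriesIdeal X _ _) (X_mem_entriesIdeal X _ _)

theorem minorsIdeal_le_entriesIdeal (hs : 0 < s) : minorsIdeal R X ≤ entriesIdeal R X := by
  rw [minorsIdeal, Ideal.span_le]
  rintro _ ⟨c, -, rfl⟩
  rw [Matrix.det_apply']
  refine Ideal.sum_mem _ fun σ _ => Ideal.mul_mem_left _ _ (Ideal.pow_le_self hs.ne' ?_)
  simpa using Ideal.prod_mem_pow_card fun i => X_mem_entriesIdeal X (σ i) (c i)

def firstRow (hs : 0 < s) (d : ℕ) : R :=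
  if h : d < t then X ⟨0, hs⟩ ⟨d, h⟩ else 0

theorem X_sub_firstRow_mem_diagIdeal (hs : 0 < s) {i j : ℕ} (hi : i < s) (hj : j < t)
    (hij : i ≤ j) (hw : j - i ≤ t - s) :
    X ⟨i, hi⟩ ⟨j, hj⟩ - firstRow X hs (j - i) ∈ diagIdeal R X := by
  induction i generalizing j with
  | zero => simp [firstRow, hj]
  | succ i ih =>
    obtain ⟨j, rfl⟩ : ∃ j', j = j' + 1 := ⟨j - 1, by omega⟩
    simpa using add_mem (X_sub_X_mem_diagIdeal X hi hj (by omega) (by omega))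
      (ih (j := j) (by omega) (by omega) (by omega) (by omega))

theorem X_sub_bandEntry_mem_diagIdeal (hs : 0 < s) (i : Fin s) (j : Fin t) :
    X i j - bandEntry (firstRow X hs) (t - s) i j ∈ diagIdeal R X := by
  unfold bandEntry
  split_ifs with h
  · exact X_sub_firstRow_mem_diagIdeal X hs i.isLt j.isLt h.1 h.2
  · rw [sub_zero]
    exact X_mem_diagIdeal X (by omega)

theorem bandEntry_firstRow_mem_entriesIdeal (hs : 0 < s) (i j : ℕ) :
    bandEntry (firstRow X hs) (t - s) i j ∈ entriesIdeal R X := by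
  unfold bandEntry firstRow
  split_ifs <;> first | exact X_mem_entriesIdeal X _ _ | exact zero_mem _

theorem span_bandMinors_firstRow_le (hs : 0 < s) (hst : s ≤ t) :
    Ideal.span (bandMinors (firstRow X hs) (t - s) s) ≤
      diagIdeal R X * entriesIdeal R X ^ (s - 1) + minorsIdeal R X := by
  rw [Ideal.span_le]
  rintro _ ⟨c, hc, hct, rfl⟩
  set c' : Fin s → Fin t := fun k => ⟨c k, by have := hct k; omega⟩
  have hminor : (Matrix.of fun i k => X i (c' k)).det ∈ minorsIdeal R X :=
    Ideal.subset_span ⟨c', fun k l hkl => hc hkl, rfl⟩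
  rw [← sub_add_cancel (Matrix.det _) (Matrix.of fun i k => X i (c' k)).det]
  refine add_mem (Ideal.mem_sup_left ?_) (Ideal.mem_sup_right hminor)
  refine Matrix.det_sub_det_mem_mul_pow (fun _ _ => bandEntry_firstRow_mem_entriesIdeal X hs _ _)
    (fun _ _ => X_mem_entriesIdeal X _ _) fun i k => ?_
  simpa using neg_mem (X_sub_bandEntry_mem_diagIdeal X hs i (c' k))

theorem entriesIdeal_pow_le (hs : 0 < s) (hst : s ≤ t) :
    entriesIdeal R X ^ s ≤ diagIdeal R X * entriesIdeal R X ^ (s - 1) + minorsIdeal R X := by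
  refine Ideal.span_pow_le_of_forall_prod_mem fun u hu => ?_
  choose i j hij using hu
  set v : Fin s → R := fun k => bandEntry (firstRow X hs) (t - s) (i k) (j k)
  rw [← sub_add_cancel (∏ k, u k) (∏ k, v k)]
  refine add_mem (Ideal.mem_sup_left ?_) ?_
  · refine Ideal.prod_sub_prod_mem_mul_pow (fun k => ?_)
      (fun k => bandEntry_firstRow_mem_entriesIdeal X hs _ _) fun k => ?_
    · rw [hij]; exact X_mem_entriesIdeal X _ _
    · rw [hij]; exact X_sub_bandEntry_mem_diagIdeal X hs _ _
  · exact prod_bandEntry_mem fun hband => span_bandMinors_firstRow_le X hs hst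
      (prod_mem_span_bandMinors _ fun k => (hband k).2)

end DeterminantalIdeals

theorem Finset.exists_fin_range_eq_image {ι α : Type*} {P : Finset ι} {n : ℕ} (h : #P = n)
    (g : ι → α) : ∃ f : Fin n → α, Set.range f = g '' P := by
  refine ⟨g ∘ Subtype.val ∘ (P.equivFinOfCardEq h).symm, ?_⟩
  rw [Set.range_comp, Set.range_comp, (P.equivFinOfCardEq h).symm.surjective.range_eq,
    Set.image_univ, Subtype.range_coe]

section Generators

variable {R : Type*} [CommRing R] {s t : ℕ} (X : Fin s → Fin t → R)

def diagGenerator (p : Fin s × Fin t) : R :=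
  if 1 ≤ (p.1 : ℕ) ∧ (p.1 : ℕ) ≤ p.2 ∧ (p.2 : ℕ) - p.1 ≤ t - s then
    X p.1 p.2 - X ⟨(p.1 : ℕ) - 1, by have := p.1.isLt; omega⟩
      ⟨(p.2 : ℕ) - 1, by have := p.2.isLt; omega⟩
  else X p.1 p.2

def diagPositions (s t : ℕ) : Finset (Fin s × Fin t) :=
  univ.filter fun p => ¬((p.1 : ℕ) = 0 ∧ (p.2 : ℕ) ≤ t - s)

theorem diagIdeal_eq_span_image :
    diagIdeal R X = Ideal.span (diagGenerator X '' diagPositions s t) := by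
  rw [diagIdeal]
  congr 1
  ext r
  simp only [Set.mem_union, Set.mem_ofPred_eq, Set.mem_image, diagPositions, coe_filter,
    mem_univ, true_and, Prod.exists, diagGenerator]
  constructor
  · rintro (⟨i, j, h, rfl⟩ | ⟨i, j, h1, h2, h3, rfl⟩)
    · exact ⟨i, j, by omega, by rw [if_neg (by omega)]⟩
    · exact ⟨i, j, by omega, by rw [if_pos ⟨h1, h2, h3⟩]⟩
  · rintro ⟨i, j, hij, rfl⟩
    split_ifs with h
    · exact Or.inr ⟨i, j, h.1, h.2.1, h.2.2, rfl⟩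
    · exact Or.inl ⟨i, j, by omega, rfl⟩

theorem card_diagPositions (hs : 0 < s) (hst : s ≤ t) :
    #(diagPositions s t) = s * t - (t - s + 1) := by
  have hband : univ.filter (fun p : Fin s × Fin t => (p.1 : ℕ) = 0 ∧ (p.2 : ℕ) ≤ t - s) =
      {⟨0, hs⟩} ×ˢ Iic ⟨t - s, by omega⟩ := by
    ext ⟨i, j⟩
    simp only [mem_filter, mem_univ, true_and, mem_product, mem_singleton, mem_Iic, Fin.ext_iff,
      Fin.le_def]
  rw [diagPositions, filter_not, card_sdiff_of_subset (filter_subset _ _), hband, card_product,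
    card_singleton, Fin.card_Iic, card_univ, Fintype.card_prod, Fintype.card_fin,
    Fintype.card_fin, one_mul]

end Generators

section Quotient

variable {R : Type*} [CommRing R] {s t : ℕ} (X : Fin s → Fin t → R)

theorem map_entriesIdeal_pow_eq (hs : 0 < s) (hst : s ≤ t) :
    (entriesIdeal R X).map (Ideal.Quotient.mk (minorsIdeal R X)) ^ s =
      (diagIdeal R X).map (Ideal.Quotient.mk (minorsIdeal R X)) *
        (entriesIdeal R X).map (Ideal.Quotient.mk (minorsIdeal R X)) ^ (s - 1) := by
  set π := Ideal.Quotient.mk (minorsIdeal R X)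
  refine le_antisymm ?_ ?_
  · calc (entriesIdeal R X).map π ^ s = (entriesIdeal R X ^ s).map π := (Ideal.map_pow _ _ _).symm
      _ ≤ (diagIdeal R X * entriesIdeal R X ^ (s - 1) + minorsIdeal R X).map π :=
        Ideal.map_mono (entriesIdeal_pow_le X hs hst)
      _ = (diagIdeal R X).map π * (entriesIdeal R X).map π ^ (s - 1) := by
        rw [Ideal.add_eq_sup, Ideal.map_sup, Ideal.map_quotient_self, sup_bot_eq, Ideal.map_mul,
          Ideal.map_pow]
  · calc (diagIdeal R X).map π * (entriesIdeal R X).map π ^ (s - 1)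
        ≤ (entriesIdeal R X).map π * (entriesIdeal R X).map π ^ (s - 1) :=
          Ideal.mul_mono_left (Ideal.map_mono (diagIdeal_le_entriesIdeal X))
      _ = (entriesIdeal R X).map π ^ s := by rw [← pow_succ', Nat.sub_add_cancel hs]

theorem isPrime_map_entriesIdeal [IsLocalRing R]
    (hmax : IsLocalRing.maximalIdeal R = entriesIdeal R X) (hs : 0 < s) :
    ((entriesIdeal R X).map (Ideal.Quotient.mk (minorsIdeal R X))).IsPrime := by
  have : (entriesIdeal R X).IsPrime := hmax ▸ (IsLocalRing.maximalIdeal.isMaximal R).isPrime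
  exact Ideal.map_isPrime_of_surjective Ideal.Quotient.mk_surjective
    (by rw [Ideal.mk_ker]; exact minorsIdeal_le_entriesIdeal X hs)

end Quotient

theorem stmt_12_general
    (R : Type*) [CommRing R] [IsLocalRing R]
    (s t : ℕ) (hs : 2 ≤ s) (hst : s ≤ t)
    (X : Fin s → Fin t → R)
    -- R is a regular local ring of dimension st whose maximal ideal is generated by
    -- the st elements X i j (a regular system of parameters)
    (hmax : IsLocalRing.maximalIdeal R = entriesIdeal R X)
    -- A = R/I_s(X), with maximal ideal m the image of the ideal generated by all X i j,
    -- and q = QA the image of Q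
    (m : Ideal (R ⧸ minorsIdeal R X))
    (hm : m = (entriesIdeal R X).map (Ideal.Quotient.mk (minorsIdeal R X)))
    (q : Ideal (R ⧸ minorsIdeal R X))
    (hq : q = (diagIdeal R X).map (Ideal.Quotient.mk (minorsIdeal R X))) :
    -- q is a parameter ideal of A: it is generated by st − (t − s + 1) = dim A elements
    -- and is m-primary, and m^s = q·m^{s−1}
    (∃ f : Fin (s * t - (t - s + 1)) → R ⧸ minorsIdeal R X,
        q = Ideal.span (Set.range f)) ∧
      q.radical = m ∧
      m ^ s = q * m ^ (s - 1) := by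
  have hs0 : 0 < s := by omega
  subst hm hq
  have hpow := map_entriesIdeal_pow_eq X hs0 hst
  refine ⟨?_, le_antisymm ?_ fun x hx => ⟨s, ?_⟩, hpow⟩
  · obtain ⟨f, hf⟩ := Finset.exists_fin_range_eq_image (card_diagPositions hs0 hst)
      (Ideal.Quotient.mk (minorsIdeal R X) ∘ diagGenerator X)
    rw [diagIdeal_eq_span_image, Ideal.map_span, ← Set.image_comp]
    exact ⟨f, by rw [hf]⟩
  · exact (isPrime_map_entriesIdeal X hmax hs0).radical_le_iff.2
      (Ideal.map_mono (diagIdeal_le_entriesIdeal X))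
  · exact Ideal.mul_le_left (hpow ▸ Ideal.pow_mem_pow hx s)

theorem stmt_12
    (R : Type*) [CommRing R] [IsNoetherianRing R] [IsLocalRing R]
    (s t : ℕ) (hs : 2 ≤ s) (hst : s ≤ t)
    (X : Fin s → Fin t → R)
    -- R is a regular local ring of dimension st whose maximal ideal is generated by
    -- the st elements X i j (a regular system of parameters)
    (hmax : IsLocalRing.maximalIdeal R = entriesIdeal R X)
    (hdim : ringKrullDim R = (s * t : ℕ))
    -- A = R/I_s(X), with maximal ideal m the image of the ideal generated by all X i j,
    -- and q = QA the image of Q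
    (m : Ideal (R ⧸ minorsIdeal R X))
    (hm : m = (entriesIdeal R X).map (Ideal.Quotient.mk (minorsIdeal R X)))
    (q : Ideal (R ⧸ minorsIdeal R X))
    (hq : q = (diagIdeal R X).map (Ideal.Quotient.mk (minorsIdeal R X))) :
    -- q is a parameter ideal of A: it is generated by st − (t − s + 1) = dim A elements
    -- and is m-primary, and m^s = q·m^{s−1}
    (∃ f : Fin (s * t - (t - s + 1)) → R ⧸ minorsIdeal R X,
        q = Ideal.span (Set.range f)) ∧
      q.radical = m ∧
      m ^ s = q * m ^ (s - 1) :=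
  stmt_12_general R s t hs hst X hmax m hm q hq
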